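/- arXiv:1406.0233 — 5 statements merged into one kernel-verified Lean document; each statement's English description precedes it below -/
import Mathlib

section
/- Let (Z,d) be a proper metric space, X,Y ⊆ Z closed, x₀ ∈ X, y₀ ∈ Y, r > 0, ε > 0. Suppose d(x₀,y₀) ≤ ε, B_X(x₀,r) ⊆_ε Y and B_Y(y₀,r) ⊆_ε X. Define K = {y ∈ Y : dist(y, B_X(x₀,r)) ≤ ε}. Then K is a compact subset of Y satisfying B_Y(y₀, r−2ε) ⊆ K ⊆ B_Y(y₀, r+2ε) and the Hausdorff distance between B_X(x₀,r) and K is at most ε. -/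
/-!
Writing `A = X ∩ closedBall x₀ r`, the set `K` is `Y ∩ cthickening ε A`, which is compact because `A`
is. The two ball inclusions are triangle inequalities through `x₀` and `y₀`, and the Hausdorff bound
holds because the point of `Y` within `ε` of a point of `A` already lies in `K`.
-/

open Metric Set

namespace Metric

variable {α : Type*} [PseudoMetricSpace α]

theorem mem_cthickening_iff_infDist_le {δ : ℝ} {E : Set α} {x : α} (hδ : 0 ≤ δ)
    (hE : E.Nonempty) : x ∈ cthickening δ E ↔ infDist x E ≤ δ := by
  rw [mem_cthickening_iff, infDist,
    ← ENNReal.toReal_le_toReal (infEDist_ne_top hE) ENNReal.ofReal_ne_top, ENNReal.toReal_ofReal hδ]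

theorem sep_infDist_le_eq_inter_cthickening (Y : Set α) {δ : ℝ} {E : Set α} (hδ : 0 ≤ δ)
    (hE : E.Nonempty) : {y ∈ Y | infDist y E ≤ δ} = Y ∩ cthickening δ E := by
  ext y
  exact and_congr_right fun _ => (mem_cthickening_iff_infDist_le hδ hE).symm

theorem cthickening_closedBall_subset (x : α) {r δ : ℝ} (hr : 0 ≤ r) (hδ : 0 ≤ δ) :
    cthickening δ (closedBall x r) ⊆ closedBall x (δ + r) := by
  rw [← cthickening_singleton x hr, ← cthickening_singleton x (add_nonneg hδ hr)]
  exact cthickening_cthickening_subset hδ hr _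

theorem hausdorffDist_inter_cthickening_le {A Y : Set α} {ε : ℝ} (hε : 0 ≤ ε) (hA : A.Nonempty)
    (hAY : ∀ a ∈ A, ∃ y ∈ Y, dist a y ≤ ε) : hausdorffDist A (Y ∩ cthickening ε A) ≤ ε := by
  refine hausdorffDist_le_of_infDist hε (fun a ha => ?_)
    (fun y hy => (mem_cthickening_iff_infDist_le hε hA).1 hy.2)
  obtain ⟨y, hyY, hay⟩ := hAY a ha
  have hyK : y ∈ Y ∩ cthickening ε A :=
    ⟨hyY, mem_cthickening_of_dist_le y a ε A ha (by rwa [dist_comm])⟩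
  exact (infDist_le_dist_of_mem hyK).trans hay

variable {X Y : Set α} {x₀ y₀ : α} {r ε : ℝ}

theorem inter_closedBall_subset_cthickening_inter_closedBall (hdist : dist x₀ y₀ ≤ ε)
    (hYX : ∀ z ∈ Y ∩ closedBall y₀ r, ∃ x ∈ X, dist z x ≤ ε) :
    Y ∩ closedBall y₀ (r - 2 * ε) ⊆ cthickening ε (X ∩ closedBall x₀ r) := by
  rintro y ⟨hyY, hy⟩
  have hε : 0 ≤ ε := dist_nonneg.trans hdist
  obtain ⟨x, hxX, hyx⟩ := hYX y ⟨hyY, closedBall_subset_closedBall (by linarith) hy⟩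
  refine mem_cthickening_of_dist_le y x ε _ ⟨hxX, ?_⟩ hyx
  rw [mem_closedBall] at hy ⊢
  calc dist x x₀ ≤ dist x y + dist y y₀ + dist y₀ x₀ := dist_triangle4 x y y₀ x₀
    _ ≤ ε + (r - 2 * ε) + ε := by rw [dist_comm x y, dist_comm y₀ x₀]; gcongr
    _ = r := by ring

theorem cthickening_inter_closedBall_subset_closedBall (hr : 0 ≤ r) (hdist : dist x₀ y₀ ≤ ε) :
    cthickening ε (X ∩ closedBall x₀ r) ⊆ closedBall y₀ (r + 2 * ε) := by
  have hε : 0 ≤ ε := dist_nonneg.trans hdist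
  calc cthickening ε (X ∩ closedBall x₀ r)
      ⊆ cthickening ε (closedBall x₀ r) := cthickening_subset_of_subset ε inter_subset_right
    _ ⊆ closedBall x₀ (ε + r) := cthickening_closedBall_subset x₀ hr hε
    _ ⊆ closedBall y₀ (r + 2 * ε) := closedBall_subset_closedBall' (by linarith)

end Metric

theorem stmt2_general {Z : Type*} [MetricSpace Z] [ProperSpace Z]
    (X Y : Set Z) (hX : IsClosed X) (hY : IsClosed Y)
    (x₀ y₀ : Z) (hx₀ : x₀ ∈ X)
    (r ε : ℝ) (hr : 0 < r)
    (hdist : dist x₀ y₀ ≤ ε)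
    (hXY : ∀ z ∈ X ∩ closedBall x₀ r, ∃ y ∈ Y, dist z y ≤ ε)
    (hYX : ∀ z ∈ Y ∩ closedBall y₀ r, ∃ x ∈ X, dist z x ≤ ε)
    (K : Set Z)
    (hK : K = {y ∈ Y | Metric.infDist y (X ∩ closedBall x₀ r) ≤ ε}) :
    IsCompact K ∧ K ⊆ Y ∧
    Y ∩ closedBall y₀ (r - 2 * ε) ⊆ K ∧
    K ⊆ Y ∩ closedBall y₀ (r + 2 * ε) ∧
    Metric.hausdorffDist (X ∩ closedBall x₀ r) K ≤ ε := by
  have hε : 0 ≤ ε := dist_nonneg.trans hdist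
  have hA : (X ∩ closedBall x₀ r).Nonempty := ⟨x₀, hx₀, mem_closedBall_self hr.le⟩
  rw [sep_infDist_le_eq_inter_cthickening Y hε hA] at hK
  subst hK
  exact ⟨((isCompact_closedBall x₀ r).inter_left hX).cthickening.inter_left hY, inter_subset_left,
    fun y hy => ⟨hy.1, inter_closedBall_subset_cthickening_inter_closedBall hdist hYX hy⟩,
    fun y hy => ⟨hy.1, cthickening_inter_closedBall_subset_closedBall hr.le hdist hy.2⟩,
    hausdorffDist_inter_cthickening_le hε hA hXY⟩

/-- construction of the compact set `K` approximating the ball of `X` within `Y`. -/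
theorem stmt2 {Z : Type*} [MetricSpace Z] [ProperSpace Z]
    (X Y : Set Z) (hX : IsClosed X) (hY : IsClosed Y)
    (x₀ y₀ : Z) (hx₀ : x₀ ∈ X) (hy₀ : y₀ ∈ Y)
    (r ε : ℝ) (hr : 0 < r) (hε : 0 < ε)
    (hdist : dist x₀ y₀ ≤ ε)
    (hXY : ∀ z ∈ X ∩ closedBall x₀ r, ∃ y ∈ Y, dist z y ≤ ε)
    (hYX : ∀ z ∈ Y ∩ closedBall y₀ r, ∃ x ∈ X, dist z x ≤ ε)
    (K : Set Z)
    (hK : K = {y ∈ Y | Metric.infDist y (X ∩ closedBall x₀ r) ≤ ε}) :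
    IsCompact K ∧ K ⊆ Y ∧
    Y ∩ closedBall y₀ (r - 2 * ε) ⊆ K ∧
    K ⊆ Y ∩ closedBall y₀ (r + 2 * ε) ∧
    Metric.hausdorffDist (X ∩ closedBall x₀ r) K ≤ ε :=
  stmt2_general X Y hX hY x₀ y₀ hx₀ r ε hr hdist hXY hYX K hK
end

section
/- In the open set I = (−1,1)×(−1/2,1/2) with the metric induced by ‖·‖_∞, there is no g ∈ C₀(I) which is L-Lipschitz for some constant L < 2 and satisfies g(x,0) = 1−|x| for all x ∈ (−1,1). -/
open Metric Set Filter Topology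
open scoped NNReal

/-- on `I = (−1,1)×(−1/2,1/2)` with the sup-metric, there is no `K`-Lipschitz
(`K < 2`) function vanishing at infinity which extends `x ↦ 1 − |x|` on `(−1,1)×{0}`. -/
theorem stmt10 (I : Set (ℝ × ℝ))
    (hI : I = Set.Ioo (-1 : ℝ) 1 ×ˢ Set.Ioo (-(1/2) : ℝ) (1/2))
    (K : ℝ≥0) (hK : (K : ℝ) < 2) :
    ¬ ∃ g : I → ℝ, Continuous g ∧ LipschitzWith K g ∧
      Tendsto g (cocompact I) (𝓝 0) ∧
      ∀ p : I, (p : ℝ × ℝ).2 = 0 → g p = 1 - |(p : ℝ × ℝ).1| := by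
  rintro ⟨g, -, hg, hten, hext⟩
  have h2 : ((0 : ℝ), (0 : ℝ)) ∈ I := by rw [hI]; constructor <;> constructor <;> norm_num
  set q : I := ⟨(0, 0), h2⟩ with hqdef
  have hq : g q = 1 := by simpa [hqdef] using hext q rfl
  have hfrac : ∀ n : ℕ, (0 : ℝ) < 1 / (n + 2) ∧ (1 : ℝ) / (n + 2) ≤ 1 / 2 := by
    intro n
    constructor
    · positivity
    · apply one_div_le_one_div_of_le
      · norm_num
      · have : (0 : ℝ) ≤ (n : ℝ) := Nat.cast_nonneg n
        linarith
  have hy : ∀ n : ℕ, ((0 : ℝ), 1 / 2 - 1 / ((n : ℝ) + 2)) ∈ I := by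
    intro n
    obtain ⟨h1, h2'⟩ := hfrac n
    rw [hI]
    refine ⟨⟨by norm_num, by norm_num⟩, ⟨by linarith, by linarith⟩⟩
  set p : ℕ → I := fun n => ⟨(0, 1 / 2 - 1 / ((n : ℝ) + 2)), hy n⟩ with hpdef
  -- the sequence converges in ℝ² to (0, 1/2) ∉ I
  have htend : Tendsto (fun n : ℕ => (1 : ℝ) / ((n : ℝ) + 2)) atTop (𝓝 0) := by
    have h := tendsto_inv_atTop_zero.comp
      (tendsto_atTop_add_const_right atTop (2 : ℝ) tendsto_natCast_atTop_atTop)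
    simpa [one_div, Function.comp_def] using h
  have hlim : Tendsto (fun n => ((p n : ℝ × ℝ))) atTop (𝓝 ((0 : ℝ), (1 / 2 : ℝ))) := by
    rw [Prod.tendsto_iff]
    constructor
    · simp [hpdef]
    · simpa [hpdef] using (tendsto_const_nhds.sub htend :
        Tendsto (fun n : ℕ => (1/2 : ℝ) - 1 / ((n : ℝ) + 2)) atTop (𝓝 (1/2 - 0)))
  have hco : Tendsto p atTop (cocompact I) := by
    rw [hasBasis_cocompact.tendsto_right_iff]
    intro C hC
    have hCc : IsCompact ((↑) '' C : Set (ℝ × ℝ)) := hC.image continuous_subtype_val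
    have hne : ((0 : ℝ), (1 / 2 : ℝ)) ∉ ((↑) '' C : Set (ℝ × ℝ)) := by
      rintro ⟨⟨x, hx⟩, -, hxe⟩
      simp only at hxe
      rw [hxe, hI] at hx
      exact absurd hx.2.2 (lt_irrefl _)
    have hopen : ((↑) '' C : Set (ℝ × ℝ))ᶜ ∈ 𝓝 ((0 : ℝ), (1 / 2 : ℝ)) :=
      hCc.isClosed.isOpen_compl.mem_nhds hne
    filter_upwards [hlim.eventually_mem hopen] with n hn hmem
    exact hn ⟨p n, hmem, rfl⟩
  have hdist : ∀ n : ℕ, dist (p n) q ≤ 1 / 2 := by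
    intro n
    obtain ⟨h1, h2'⟩ := hfrac n
    rw [Subtype.dist_eq, Prod.dist_eq]
    simp only [Real.dist_eq, hpdef, hqdef]
    apply max_le
    · norm_num
    · rw [abs_of_nonneg (by linarith)]
      linarith
  have hbound : ∀ n : ℕ, 1 - (K : ℝ) / 2 ≤ g (p n) := by
    intro n
    have := hg.dist_le_mul (p n) q
    have hd : dist (g (p n)) (g q) ≤ (K : ℝ) * (1 / 2) := by
      refine this.trans ?_
      exact mul_le_mul_of_nonneg_left (hdist n) K.coe_nonneg
    rw [hq, Real.dist_eq] at hd
    have := abs_le.mp hd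
    linarith [this.1]
  have h0 : (0 : ℝ) ≥ 1 - (K : ℝ) / 2 :=
    ge_of_tendsto (hten.comp hco) (Eventually.of_forall hbound)
  linarith
end

section
/- Let (Z,d) be a proper metric space, X,Y ⊆ Z closed, x₀ ∈ X, y₀ ∈ Y, r > 0. Let R = inf{ d(x₀,z) : z ∈ X \ B_X(x₀,r) } and suppose ε ∈ (0, R/2) satisfies B_Y(y₀, 2r+R) ⊆_ε X and d(x₀,y₀) ≤ ε. If f : X → ℝ is 1-Lipschitz with f(x) = 0 whenever d(x₀,x) ≥ r, then ‖f‖_∞ ≤ R + r. -/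
open Metric Set

/-- bound on the sup-norm of a 1-Lipschitz function vanishing outside a ball. -/
theorem stmt11 {Z : Type*} [MetricSpace Z] [ProperSpace Z]
    (X Y : Set Z) (hX : IsClosed X) (hY : IsClosed Y)
    (x₀ y₀ : Z) (hx₀ : x₀ ∈ X) (hy₀ : y₀ ∈ Y)
    (r : ℝ) (hr : 0 < r)
    (R : ℝ) (hR : R = sInf {d : ℝ | ∃ z ∈ X \ closedBall x₀ r, d = dist x₀ z})
    (ε : ℝ) (hε : ε ∈ Set.Ioo 0 (R / 2))
    (hball : ∀ z ∈ Y ∩ closedBall y₀ (2 * r + R), ∃ x ∈ X, dist z x ≤ ε)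
    (hxy : dist x₀ y₀ ≤ ε)
    (f : X → ℝ) (hf : LipschitzWith 1 f)
    (hsupp : ∀ x : X, r ≤ dist (x : Z) x₀ → f x = 0) :
    ∀ x : X, |f x| ≤ R + r := by
  have hRpos : 0 < R := by
    have h1 := hε.1
    have h2 := hε.2
    linarith
  intro x
  by_cases hx : r ≤ dist (x : Z) x₀
  · rw [hsupp x hx]
    simp
    linarith
  push_neg at hx
  set S : Set ℝ := {d : ℝ | ∃ z ∈ X \ closedBall x₀ r, d = dist x₀ z} with hS
  have hSne : S.Nonempty := by
    by_contra h
    rw [Set.not_nonempty_iff_eq_empty] at h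
    rw [h, Real.sInf_empty] at hR
    linarith
  apply le_of_forall_pos_le_add
  intro δ hδ
  obtain ⟨a, haS, halt⟩ := Real.lt_sInf_add_pos hSne hδ
  obtain ⟨z, ⟨hzX, hzball⟩, rfl⟩ := haS
  have hzr : r < dist z x₀ := by
    simp [Metric.mem_closedBall] at hzball
    exact hzball
  have hfz : f ⟨z, hzX⟩ = 0 := hsupp ⟨z, hzX⟩ hzr.le
  have hlip := hf.dist_le_mul x ⟨z, hzX⟩
  rw [Subtype.dist_eq] at hlip
  have habs : |f x| = dist (f x) (f ⟨z, hzX⟩) := by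
    rw [hfz, Real.dist_eq, sub_zero]
  rw [habs]
  have hd : dist (x : Z) z ≤ dist (x : Z) x₀ + dist x₀ z := dist_triangle _ _ _
  have : dist x₀ z < R + δ := by rw [hR]; exact halt
  simp at hlip
  linarith
end

section
/- Let (Z,d) be a proper metric space, Y ⊆ Z closed, y₀ ∈ Y, r > 0, ε > 0, M > 0. Let B = {y ∈ Y : d(y,y₀) ∈ [r+2ε, 2r+M]} and assume B is nonempty and compact. Let g : Z → ℝ be 1-Lipschitz with |g(y)| ≤ ε for all y ∈ B and with g(y) = 0 for y ∈ Y outside B ∪ B_Y(y₀, r+2ε). Define t(y) = dist(y, B) and h(y) = max(min(g(y), t(y)), −t(y)) for y ∈ Y. Then h is 1-Lipschitz on Y, h is supported on B_Y(y₀, r+2ε), and ‖g − h‖_{∞,Y} ≤ ε. -/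
open Metric Set

/-- truncating `g` by the distance function to `B` yields a 1-Lipschitz
function on `Y` supported on the ball of radius `r + 2ε` which is uniformly `ε`-close to `g`. -/
theorem stmt12 {Z : Type*} [MetricSpace Z] [ProperSpace Z]
    (Y : Set Z) (hY : IsClosed Y) (y₀ : Z) (hy₀ : y₀ ∈ Y)
    (r ε M : ℝ) (hr : 0 < r) (hε : 0 < ε) (hM : 0 < M)
    (B : Set Z) (hB : B = {y ∈ Y | dist y y₀ ∈ Set.Icc (r + 2 * ε) (2 * r + M)})
    (hBne : B.Nonempty) (hBc : IsCompact B)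
    (g : Z → ℝ) (hg : LipschitzWith 1 g)
    (hgB : ∀ y ∈ B, |g y| ≤ ε)
    (hg0 : ∀ y ∈ Y, y ∉ B ∪ (Y ∩ closedBall y₀ (r + 2 * ε)) → g y = 0)
    (h : Z → ℝ)
    (hh : h = fun y => max (min (g y) (Metric.infDist y B)) (-(Metric.infDist y B))) :
    LipschitzOnWith 1 h Y ∧
    (∀ y ∈ Y, r + 2 * ε < dist y y₀ → h y = 0) ∧
    (∀ y ∈ Y, |g y - h y| ≤ ε) := by
  have ht : LipschitzWith 1 (fun y : Z => Metric.infDist y B) :=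
    Metric.lipschitz_infDist_pt B
  have hlip : LipschitzWith 1 h := by
    rw [hh]
    simpa using (hg.min ht).max ht.neg
  have htnn : ∀ y : Z, 0 ≤ Metric.infDist y B := fun y => Metric.infDist_nonneg
  -- key bound: |g y| ≤ ε + infDist y B
  have hkey : ∀ y : Z, |g y| ≤ ε + Metric.infDist y B := by
    intro y
    obtain ⟨b, hbB, hbd⟩ := hBc.exists_infDist_eq_dist hBne y
    have h1 : |g y| - |g b| ≤ dist y b := by
      have := hg.dist_le_mul y b
      simp only [NNReal.coe_one, one_mul] at this
      calc |g y| - |g b| ≤ |g y - g b| := abs_sub_abs_le_abs_sub _ _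
        _ ≤ dist y b := by rw [Real.dist_eq] at this; exact this
    have := hgB b hbB
    rw [← hbd] at h1
    linarith
  refine ⟨hlip.lipschitzOnWith, ?_, ?_⟩
  · intro y hy hdy
    by_cases hyB : y ∈ B
    · have ht0 : Metric.infDist y B = 0 := Metric.infDist_zero_of_mem hyB
      rw [hh]; simp only [ht0, neg_zero]
      rcases le_total (g y) 0 with h' | h'
      · rw [min_eq_left h', max_eq_right h']
      · rw [min_eq_right h', max_self]
    · have hg0' : g y = 0 := by
        apply hg0 y hy
        rintro (h' | h')
        · exact hyB h'
        · exact absurd h'.2 (by simp only [Metric.mem_closedBall, not_le]; exact hdy)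
      rw [hh]; simp only [hg0']
      rw [min_eq_left (htnn y), max_eq_left (neg_nonpos.mpr (htnn y))]
  · intro y hy
    set t := Metric.infDist y B with htdef
    have ht0 : 0 ≤ t := htnn y
    have hb : |g y| ≤ ε + t := hkey y
    rw [abs_le] at hb
    rw [hh]
    simp only
    rw [← htdef]
    rcases le_total (g y) (-t) with h1 | h1
    · rw [min_eq_left (h1.trans (neg_le_self ht0)), max_eq_right h1]
      rw [abs_le]; constructor <;> linarith
    · rcases le_total t (g y) with h2 | h2
      · rw [min_eq_right h2, max_eq_left (neg_le_self ht0)]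
        rw [abs_le]; constructor <;> linarith
      · rw [min_eq_left h2, max_eq_left h1]
        simp [hε.le]
end

section
/- Let (X,d) be a locally compact metric space and suppose there exists a sequence (e_n) in C₀(X) of compactly supported functions with 0 ≤ e_n ≤ 1, Lipschitz constant L(e_n) → 0, and (e_n) an approximate unit for C₀(X) (i.e. e_n f → f uniformly for all f ∈ C₀(X)). Then (X,d) is proper, i.e. all closed balls are compact. -/
open Filter Topology Metric
open scoped NNReal

/- A function `g` with compact support that is `K`-Lipschitz stays positive on the ball of radius
`r` around any point where `g > K r`, so that ball lies in the compact support. An approximate unit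
satisfies `e n x → 1` at every point (test it against a bump function equal to `1` at `x`), while the
Lipschitz constants tend to `0`; hence every closed ball is eventually covered by such a support. -/

theorem isCompact_closedBall_of_lipschitzWith_of_hasCompactSupport {X : Type*} [MetricSpace X]
    {g : X → ℝ} {K : ℝ≥0} (hlip : LipschitzWith K g) (hsupp : HasCompactSupport g)
    {x : X} {r : ℝ} (hx : K * r < g x) : IsCompact (closedBall x r) := by
  refine hsupp.isCompact.of_isClosed_subset isClosed_closedBall fun y hy => subset_tsupport _ ?_
  have hdist : dist (g x) (g y) ≤ K * r :=
    calc dist (g x) (g y) ≤ K * dist x y := hlip.dist_le_mul x y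
      _ ≤ K * r := by gcongr; exact mem_closedBall'.1 hy
  have hgy : 0 < g y := by linarith [(abs_le.1 (Real.dist_eq _ _ ▸ hdist)).2]
  exact hgy.ne'

theorem tendsto_apply_one_of_tendstoUniformly_mul {X ι : Type*} [TopologicalSpace X]
    [RegularSpace X] [LocallyCompactSpace X] {l : Filter ι} (e : ι → X → ℝ)
    (happrox : ∀ f : X → ℝ, Continuous f → Tendsto f (cocompact X) (𝓝 0) →
      TendstoUniformly (fun n x => e n x * f x) f l) (x : X) :
    Tendsto (fun n => e n x) l (𝓝 1) := by
  obtain ⟨f, hfx, -, hfsupp, -⟩ := exists_continuous_one_zero_of_isCompact isCompact_singleton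
    isClosed_empty (Set.disjoint_empty {x})
  have hfx : f x = 1 := hfx rfl
  simpa [hfx] using (happrox f f.continuous hfsupp.is_zero_at_infty).tendsto_at x

theorem stmt17_general {X : Type*} [MetricSpace X] [LocallyCompactSpace X]
    (e : ℕ → X → ℝ) (K : ℕ → ℝ≥0)
    (hsupp : ∀ n, HasCompactSupport (e n))
    (hlip : ∀ n, LipschitzWith (K n) (e n))
    (hK : Tendsto (fun n => (K n : ℝ)) atTop (𝓝 0))
    (happrox : ∀ f : X → ℝ, Continuous f → Tendsto f (cocompact X) (𝓝 0) →
      TendstoUniformly (fun n x => e n x * f x) f atTop) :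
    ProperSpace X := by
  refine .of_isCompact_closedBall_of_le 0 fun x r _ => ?_
  have hKr : Tendsto (fun n => (K n : ℝ) * r) atTop (𝓝 0) := by
    simpa using hK.mul_const r
  obtain ⟨n, hn⟩ := (hKr.eventually_lt
    (tendsto_apply_one_of_tendstoUniformly_mul e happrox x) one_pos).exists
  exact isCompact_closedBall_of_lipschitzWith_of_hasCompactSupport (hlip n) (hsupp n) hn

/-- if a locally compact metric space admits an approximate unit of compactly
supported `[0,1]`-valued functions with Lipschitz constants tending to 0, it is proper. -/
theorem stmt17 {X : Type*} [MetricSpace X] [LocallyCompactSpace X]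
    (e : ℕ → X → ℝ) (K : ℕ → ℝ≥0)
    (hcont : ∀ n, Continuous (e n))
    (hsupp : ∀ n, HasCompactSupport (e n))
    (hrange : ∀ n x, e n x ∈ Set.Icc (0 : ℝ) 1)
    (hlip : ∀ n, LipschitzWith (K n) (e n))
    (hK : Tendsto (fun n => (K n : ℝ)) atTop (𝓝 0))
    (happrox : ∀ f : X → ℝ, Continuous f → Tendsto f (cocompact X) (𝓝 0) →
      TendstoUniformly (fun n x => e n x * f x) f atTop) :
    ProperSpace X :=
  stmt17_general e K hsupp hlip hK happrox
end
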